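/- Let n ≥ 4 be an even integer and let C be a locally optimal coloring of K_n that is not a one-factorization. Then there exist two vertices x, y and a coloring C' agreeing with C on every edge not incident with x or y such that Ψ(C') < Ψ(C). -/

import Mathlib

open Finset

/-- A (not necessarily proper) coloring of the edges of `K_n` with the colors `{1, …, n-1}`
(modeled as `Fin (n-1)`).  The values on diagonal elements of `Sym2 (Fin n)` are irrelevant. -/
def EdgeColoring (n : ℕ) : Type := Sym2 (Fin n) → Fin (n - 1)

/-- `aCount C u μ` is the number of `μ`-colored edges of `C` incident with the vertex `u`. -/
def aCount {n : ℕ} (C : EdgeColoring n) (u : Fin n) (μ : Fin (n - 1)) : ℕ :=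
  (Finset.univ.filter (fun v : Fin n => v ≠ u ∧ C s(u, v) = μ)).card

/-- `Phi C = Σ_{u,μ} a_{u,μ}(C)²`. -/
def Phi {n : ℕ} (C : EdgeColoring n) : ℕ :=
  ∑ u : Fin n, ∑ μ : Fin (n - 1), (aCount C u μ) ^ 2

/-- `Psi C` is the number of unordered pairs of distinct incident edges of `K_n` receiving the
same color under `C` (counted as ordered pairs and divided by two). -/
def Psi {n : ℕ} (C : EdgeColoring n) : ℕ :=
  ((Finset.univ : Finset (Sym2 (Fin n) × Sym2 (Fin n))).filter
    (fun p => ¬ p.1.IsDiag ∧ ¬ p.2.IsDiag ∧ p.1 ≠ p.2 ∧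
      (∃ x : Fin n, x ∈ p.1 ∧ x ∈ p.2) ∧ C p.1 = C p.2)).card / 2

/-- `C'` differs from `C` on exactly one edge. -/
def DiffersOnOneEdge {n : ℕ} (C C' : EdgeColoring n) : Prop :=
  ∃ e : Sym2 (Fin n), ¬ e.IsDiag ∧ C' e ≠ C e ∧
    ∀ f : Sym2 (Fin n), ¬ f.IsDiag → f ≠ e → C' f = C f

/-- A coloring is locally optimal if no single-edge recoloring decreases `Psi`. -/
def LocallyOptimal {n : ℕ} (C : EdgeColoring n) : Prop :=
  ∀ C' : EdgeColoring n, DiffersOnOneEdge C C' → Psi C ≤ Psi C'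

/-- A one-factorization: a proper edge coloring of `K_n` with the `n-1` colors. -/
def IsOneFactorization {n : ℕ} (C : EdgeColoring n) : Prop :=
  ∀ e f : Sym2 (Fin n), ¬ e.IsDiag → ¬ f.IsDiag → e ≠ f →
    (∃ x : Fin n, x ∈ e ∧ x ∈ f) → C e ≠ C f

/-- The graph formed by the `μ`-colored edges of `C`. -/
def monoGraph {n : ℕ} (C : EdgeColoring n) (μ : Fin (n - 1)) : SimpleGraph (Fin n) where
  Adj x y := x ≠ y ∧ C s(x, y) = μ
  symm := ⟨fun x y h => ⟨h.1.symm, by rw [Sym2.eq_swap]; exact h.2⟩⟩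
  loopless := ⟨fun x h => h.1 rfl⟩

/-- An IV coloring: for every color `μ`, every connected component of the graph formed by the
`μ`-colored edges is either a single edge or a path with exactly two edges. -/
def IsIVColoring {n : ℕ} (C : EdgeColoring n) : Prop :=
  ∀ μ : Fin (n - 1), ∀ x : Fin n, (∃ y, (monoGraph C μ).Adj x y) →
    (∃ u v : Fin n, (monoGraph C μ).Adj u v ∧
        {w | (monoGraph C μ).Reachable x w} = {u, v}) ∨
    (∃ u v w : Fin n, (monoGraph C μ).Adj u v ∧ (monoGraph C μ).Adj v w ∧
        u ≠ w ∧ ¬ (monoGraph C μ).Adj u w ∧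
        {t | (monoGraph C μ).Reachable x t} = {u, v, w})

/-- `C'` is obtained from `C` by a `(u,v)`-flip. -/
def IsFlip {n : ℕ} (C C' : EdgeColoring n) (u v : Fin n) : Prop :=
  C' s(u, v) = C s(u, v) ∧
  (∀ e : Sym2 (Fin n), ¬ e.IsDiag → u ∉ e → v ∉ e → C' e = C e) ∧
  ∀ w : Fin n, w ≠ u → w ≠ v →
    ((C' s(w, u) = C s(w, u) ∧ C' s(w, v) = C s(w, v)) ∨
     (C' s(w, u) = C s(w, v) ∧ C' s(w, v) = C s(w, u)))

/-- The edges of `K_n` with both endpoints in `S`. -/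
def edgesIn {n : ℕ} (S : Finset (Fin n)) : Finset (Sym2 (Fin n)) :=
  Finset.univ.filter (fun e => ¬ e.IsDiag ∧ ∀ x : Fin n, x ∈ e → x ∈ S)

/-- `gammaColors C S`: the number of distinct colors on edges with both endpoints in `S`. -/
def gammaColors {n : ℕ} (C : EdgeColoring n) (S : Finset (Fin n)) : ℕ :=
  ((edgesIn S).image C).card

/-- The deficit `D(S) = C(|S|, 2) - γ(S)`. -/
def deficit {n : ℕ} (C : EdgeColoring n) (S : Finset (Fin n)) : ℤ :=
  (Nat.choose S.card 2 : ℤ) - gammaColors C S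

/-!
Since `2 Ψ = Φ - n (n - 1)` with `Φ = Σ_{u,μ} a_{u,μ}²`, where `a_{u,μ}` counts the `μ`-colored
edges at `u`, it suffices to decrease `Φ`. For an edge `uv` of color `μ`, local optimality gives
`a_{u,μ} + a_{v,μ} ≤ 3`, so every `a_{u,μ} ≤ 2`, and `a_{w,ρ} = 2` for some `w, ρ` because `C`
is not a one-factorization.

If `a_{u,ρ} ≥ a_{v,ρ} + 2`, some `(u, v)`-flip decreases `Φ`: orient the multigraph on the
colors having an edge `C(wu) → C(wv)` for every `w ≠ u, v` so that in- and out-degrees differ by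
at most one (merge two edges with a common end and induct), and flip at the reversed edges. This
balances the numbers of edges of each color at `u` and at `v`, strictly so for `ρ`.

If no vertex misses `ρ`, a parity count (`n` even, color degree sums even) gives a color `σ`
missed by two vertices `u, v`. Then `u` has two edges of some color, one of them `ux`; either `x`
already has two `σ`-edges, or recoloring `ux` with `σ` (which keeps `Φ`) makes it so, and we
flip at `x` and `v`.
-/

lemma Sym2.eq_of_mk_eq_mk_of_ne {α : Type*} {x x' y y' z z' : α} (hy : s(x, y) = s(x', y'))
    (hz : s(x, z) = s(x', z')) (hyz : y ≠ z) : x = x' := by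
  by_contra hx
  have hy' : y = x' := by
    rcases Sym2.eq_iff.1 hy with ⟨h, -⟩ | ⟨-, h⟩
    exacts [absurd h hx, h]
  have hz' : z = x' := by
    rcases Sym2.eq_iff.1 hz with ⟨h, -⟩ | ⟨-, h⟩
    exacts [absurd h hx, h]
  exact hyz (hy'.trans hz'.symm)

lemma Sym2.map_swap_eq_self {α : Type*} [DecidableEq α] {u v : α} {e : Sym2 α} (hu : u ∉ e)
    (hv : v ∉ e) : e.map (Equiv.swap u v) = e := by
  induction e using Sym2.ind with | h x y => ?_
  simp only [Sym2.mem_iff, not_or] at hu hv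
  rw [Sym2.map_mk, Equiv.swap_apply_of_ne_of_ne (Ne.symm hu.1) (Ne.symm hv.1),
    Equiv.swap_apply_of_ne_of_ne (Ne.symm hu.2) (Ne.symm hv.2)]

section Orientation

variable {ι K : Type*}

/-- Reading `g w` as an edge directed from `(g w).1` to `(g w).2`, the in- and out-degrees of
every vertex differ by at most one. -/
def IsBalanced [DecidableEq K] (W : Finset ι) (g : ι → K × K) : Prop :=
  ∀ τ, #{w ∈ W | (g w).1 = τ} ≤ #{w ∈ W | (g w).2 = τ} + 1 ∧
    #{w ∈ W | (g w).2 = τ} ≤ #{w ∈ W | (g w).1 = τ} + 1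

lemma isBalanced_of_injective [DecidableEq K] {W : Finset ι} {g : ι → K × K}
    (h₁ : ∀ w₁ ∈ W, ∀ w₂ ∈ W, (g w₁).1 = (g w₂).1 → w₁ = w₂)
    (h₂ : ∀ w₁ ∈ W, ∀ w₂ ∈ W, (g w₁).2 = (g w₂).2 → w₁ = w₂) : IsBalanced W g := by
  intro τ
  have c₁ : #{w ∈ W | (g w).1 = τ} ≤ 1 := card_le_one.2 fun a ha b hb => by
    simp only [mem_filter] at ha hb
    exact h₁ a ha.1 b hb.1 (ha.2.trans hb.2.symm)
  have c₂ : #{w ∈ W | (g w).2 = τ} ≤ 1 := card_le_one.2 fun a ha b hb => by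
    simp only [mem_filter] at ha hb
    exact h₂ a ha.1 b hb.1 (ha.2.trans hb.2.symm)
  omega

lemma card_filter_eq_of_merge [DecidableEq ι] {W : Finset ι} {w₁ w₂ : ι} (hw₁ : w₁ ∈ W)
    (hw₂ : w₂ ∈ W) (hne : w₁ ≠ w₂) {g g' : ι → K × K} (hg : ∀ w, w ≠ w₁ → w ≠ w₂ → g w = g' w)
    (P : K × K → Prop) [DecidablePred P] {c : ℕ}
    (hc : (if P (g w₁) then 1 else 0) + (if P (g w₂) then 1 else 0) =
      (if P (g' w₁) then 1 else 0) + c) :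
    #{w ∈ W | P (g w)} = #{w ∈ W.erase w₂ | P (g' w)} + c := by
  have hw₁' : w₁ ∈ W.erase w₂ := mem_erase.2 ⟨hne, hw₁⟩
  have hrest : ∑ w ∈ (W.erase w₂).erase w₁, (if P (g w) then 1 else 0) =
      ∑ w ∈ (W.erase w₂).erase w₁, (if P (g' w) then 1 else 0) :=
    sum_congr rfl fun w hw => by
      simp only [mem_erase] at hw
      rw [hg w hw.1 hw.2.1]
  rw [card_filter, card_filter, ← sum_erase_add _ _ hw₂, ← sum_erase_add _ _ hw₁',
    ← sum_erase_add _ _ hw₁', hrest]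
  omega

lemma exists_isBalanced_of_merge [DecidableEq ι] [DecidableEq K] {W : Finset ι}
    {f : ι → K × K} {w₁ w₂ : ι} (hw₁ : w₁ ∈ W) (hw₂ : w₂ ∈ W) (hne : w₁ ≠ w₂) {p₁ p₂ : K × K}
    (hp₁ : p₁ = f w₁ ∨ p₁ = (f w₁).swap) (hp₂ : p₂ = f w₂ ∨ p₂ = (f w₂).swap) (hp : p₁.1 = p₂.2)
    (h : ∃ g' : ι → K × K, (∀ w ∈ W.erase w₂, g' w = Function.update f w₁ (p₂.1, p₁.2) w ∨
      g' w = (Function.update f w₁ (p₂.1, p₁.2) w).swap) ∧ IsBalanced (W.erase w₂) g') :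
    ∃ g : ι → K × K, (∀ w ∈ W, g w = f w ∨ g w = (f w).swap) ∧ IsBalanced W g := by
  obtain ⟨g', hg', hbal⟩ := h
  have hswap {p q : K × K} (h : p = q ∨ p = q.swap) : p.swap = q ∨ p.swap = q.swap := by
    rcases h with rfl | rfl <;> simp
  -- orient the two edges as a path through `p₁.1` along the merged edge `g' w₁`
  obtain ⟨q₁, q₂, hq₁, hq₂, hq⟩ : ∃ q₁ q₂ : K × K, (q₁ = f w₁ ∨ q₁ = (f w₁).swap) ∧
      (q₂ = f w₂ ∨ q₂ = (f w₂).swap) ∧ ∀ τ,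
        (if q₁.1 = τ then 1 else 0) + (if q₂.1 = τ then 1 else 0) =
          (if (g' w₁).1 = τ then 1 else 0) + (if p₁.1 = τ then 1 else 0) ∧
        (if q₁.2 = τ then 1 else 0) + (if q₂.2 = τ then 1 else 0) =
          (if (g' w₁).2 = τ then 1 else 0) + (if p₁.1 = τ then 1 else 0) := by
    rcases hg' w₁ (mem_erase.2 ⟨hne, hw₁⟩) with h | h <;>
      rw [Function.update_self] at h
    · exact ⟨p₁, p₂, hp₁, hp₂, fun τ => ⟨by rw [h]; exact add_comm _ _, by rw [h, hp]⟩⟩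
    · exact ⟨p₁.swap, p₂.swap, hswap hp₁, hswap hp₂, fun τ =>
        ⟨by rw [h, hp]; rfl, by rw [h]; exact add_comm _ _⟩⟩
  set g := Function.update (Function.update g' w₁ q₁) w₂ q₂
  have hg : ∀ w, w ≠ w₁ → w ≠ w₂ → g w = g' w := fun w h₁ h₂ => by
    simp only [g, Function.update_of_ne h₁, Function.update_of_ne h₂]
  have hgw₁ : g w₁ = q₁ := by simp [g, hne]
  have hgw₂ : g w₂ = q₂ := by simp [g]
  refine ⟨g, fun w hw => ?_, fun τ => ?_⟩
  · by_cases h₂ : w = w₂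
    · subst h₂; rwa [hgw₂]
    by_cases h₁ : w = w₁
    · subst h₁; rwa [hgw₁]
    simpa [hg w h₁ h₂, Function.update_of_ne h₁] using hg' w (mem_erase.2 ⟨h₂, hw⟩)
  · rw [card_filter_eq_of_merge hw₁ hw₂ hne hg (fun p => p.1 = τ)
        (by simpa [hgw₁, hgw₂] using (hq τ).1),
      card_filter_eq_of_merge hw₁ hw₂ hne hg (fun p => p.2 = τ)
        (by simpa [hgw₁, hgw₂] using (hq τ).2)]
    have := hbal τ
    omega

theorem exists_isBalanced [DecidableEq ι] [DecidableEq K] (W : Finset ι) (f : ι → K × K) :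
    ∃ g : ι → K × K, (∀ w ∈ W, g w = f w ∨ g w = (f w).swap) ∧ IsBalanced W g := by
  induction W using Finset.strongInduction generalizing f with
  | H W ih =>
  by_cases hshare : ∃ w₁ ∈ W, ∃ w₂ ∈ W, w₁ ≠ w₂ ∧ ∃ p₁ p₂ : K × K,
      (p₁ = f w₁ ∨ p₁ = (f w₁).swap) ∧ (p₂ = f w₂ ∨ p₂ = (f w₂).swap) ∧ p₁.1 = p₂.2
  · obtain ⟨w₁, hw₁, w₂, hw₂, hne, p₁, p₂, hp₁, hp₂, hp⟩ := hshare
    exact exists_isBalanced_of_merge hw₁ hw₂ hne hp₁ hp₂ hp (ih _ (erase_ssubset hw₂) _)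
  · push Not at hshare
    refine ⟨f, fun w _ => Or.inl rfl, isBalanced_of_injective ?_ ?_⟩ <;>
      intro w₁ hw₁ w₂ hw₂ h <;> by_contra hne
    · exact hshare w₁ hw₁ w₂ hw₂ hne _ _ (Or.inl rfl) (Or.inr rfl) h
    · exact hshare w₁ hw₁ w₂ hw₂ hne _ _ (Or.inr rfl) (Or.inl rfl) h

lemma IsBalanced.congr [DecidableEq K] {W : Finset ι} {g g' : ι → K × K} (hbal : IsBalanced W g)
    (h : ∀ w ∈ W, g' w = g w) : IsBalanced W g' := by
  intro τ
  have e (p : K × K → K) : {w ∈ W | p (g' w) = τ} = {w ∈ W | p (g w) = τ} :=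
    filter_congr fun w hw => by rw [h w hw]
  rw [e Prod.fst, e Prod.snd]
  exact hbal τ

lemma exists_subset_isBalanced [DecidableEq ι] [DecidableEq K] (W : Finset ι) (f : ι → K × K) :
    ∃ S ⊆ W, IsBalanced W fun w => if w ∈ S then (f w).swap else f w := by
  obtain ⟨g, hg, hbal⟩ := exists_isBalanced W f
  refine ⟨{w ∈ W | g w ≠ f w}, filter_subset _ _, hbal.congr fun w hw => ?_⟩
  by_cases h : g w = f w
  · simp [h]
  · rw [if_pos (mem_filter.2 ⟨hw, h⟩), (hg w hw).resolve_left h]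

lemma card_fst_add_card_snd_ite_swap [DecidableEq ι] [DecidableEq K] (W S : Finset ι)
    (f : ι → K × K) (τ : K) :
    #{w ∈ W | (if w ∈ S then (f w).swap else f w).1 = τ} +
        #{w ∈ W | (if w ∈ S then (f w).swap else f w).2 = τ} =
      #{w ∈ W | (f w).1 = τ} + #{w ∈ W | (f w).2 = τ} := by
  simp only [card_filter, ← sum_add_distrib]
  refine sum_congr rfl fun w _ => ?_
  by_cases h : w ∈ S <;> simp [h, add_comm]

end Orientation

lemma sq_add_sq_le_of_balanced {x y b c : ℕ} (t : ℕ) (hsum : x + y = b + c) (hxy : x ≤ y + 1)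
    (hyx : y ≤ x + 1) : (t + x) ^ 2 + (t + y) ^ 2 ≤ (t + b) ^ 2 + (t + c) ^ 2 := by
  -- `x - y` and `b - c` have the same parity
  have key : ((x : ℤ) - y) ^ 2 ≤ ((b : ℤ) - c) ^ 2 := by
    rcases (by omega : x = y ∨ (x = y + 1 ∨ y = x + 1) ∧ (b + 1 ≤ c ∨ c + 1 ≤ b))
      with h | ⟨h, h'⟩
    · simp only [h, sub_self]; positivity
    · have h1 : ((x : ℤ) - y) ^ 2 = 1 := by rcases h with rfl | rfl <;> push_cast <;> ring
      have h2 : 1 ≤ (b : ℤ) - c ∨ (b : ℤ) - c ≤ -1 := by omega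
      rcases h2 with h2 | h2 <;> nlinarith
  have hc : (c : ℤ) = x + y - b := by omega
  zify
  rw [hc] at key ⊢
  linarith

lemma sq_add_sq_lt_of_balanced {x y b c : ℕ} (t : ℕ) (hsum : x + y = b + c) (hxy : x ≤ y + 1)
    (hyx : y ≤ x + 1) (hbc : c + 2 ≤ b) :
    (t + x) ^ 2 + (t + y) ^ 2 < (t + b) ^ 2 + (t + c) ^ 2 := by
  have hc : (c : ℤ) = x + y - b := by omega
  have h₁ : ((x : ℤ) - y) ^ 2 ≤ 1 := by nlinarith
  have h₂ : 4 ≤ ((b : ℤ) - c) ^ 2 := by nlinarith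
  zify
  rw [hc] at h₂ ⊢
  nlinarith

lemma sum_sq_ite_add {K : Type*} [Fintype K] [DecidableEq K] (a : K) (k : K → ℕ) :
    ∑ τ, ((if a = τ then 1 else 0) + k τ) ^ 2 = ∑ τ, k τ ^ 2 + 2 * k a + 1 := by
  simp only [add_sq, sum_add_distrib, ite_pow, mul_ite, ite_mul]
  simp
  ring

section

variable {n : ℕ}

lemma sum_aCount_eq (C : EdgeColoring n) (u : Fin n) : ∑ μ, aCount C u μ = n - 1 := by
  have hcard : #({u}ᶜ : Finset (Fin n)) = n - 1 := by simp [card_compl]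
  rw [card_eq_sum_card_fiberwise (f := fun v => C s(u, v)) (t := univ)
    (fun _ _ => mem_coe.2 (mem_univ _))] at hcard
  refine (sum_congr rfl fun μ _ => congrArg card ?_).trans hcard
  ext v
  simp

def incidentPairs (C : EdgeColoring n) : Finset (Sym2 (Fin n) × Sym2 (Fin n)) :=
  {p | ¬ p.1.IsDiag ∧ ¬ p.2.IsDiag ∧ p.1 ≠ p.2 ∧ (∃ x : Fin n, x ∈ p.1 ∧ x ∈ p.2) ∧ C p.1 = C p.2}

lemma card_incidentPairs (C : EdgeColoring n) :
    #(incidentPairs C) = ∑ x, ∑ μ, aCount C x μ * (aCount C x μ - 1) := by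
  simp_rw [aCount, Nat.mul_sub_one, ← offDiag_card, ← card_sigma]
  symm
  refine card_bij (fun t _ => (s(t.1, t.2.2.1), s(t.1, t.2.2.2))) ?_ ?_ ?_
  · rintro ⟨x, μ, y, z⟩ ht
    simp only [mem_sigma, mem_univ, mem_offDiag, mem_filter, true_and] at ht
    obtain ⟨⟨hyx, rfl⟩, ⟨hzx, hz⟩, hyz⟩ := ht
    simp only [incidentPairs, mem_filter, mem_univ, true_and, Sym2.mk_isDiag_iff, ne_eq,
      Sym2.congr_right]
    exact ⟨Ne.symm hyx, Ne.symm hzx, hyz, ⟨x, Sym2.mem_mk_left _ _, Sym2.mem_mk_left _ _⟩, hz.symm⟩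
  · rintro ⟨x, μ, y, z⟩ ht ⟨x', μ', y', z'⟩ ht' h
    simp only [mem_sigma, mem_univ, mem_offDiag, mem_filter, true_and] at ht ht'
    simp only [Prod.mk.injEq] at h
    obtain rfl := Sym2.eq_of_mk_eq_mk_of_ne h.1 h.2 ht.2.2
    obtain rfl := Sym2.congr_right.1 h.1
    obtain rfl := Sym2.congr_right.1 h.2
    obtain rfl : μ = μ' := ht.1.2.symm.trans ht'.1.2
    rfl
  · rintro ⟨e, f⟩ hp
    simp only [incidentPairs, mem_filter, mem_univ, true_and] at hp
    obtain ⟨he, hf, hef, ⟨x, hxe, hxf⟩, hc⟩ := hp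
    obtain ⟨y, rfl⟩ := Sym2.mem_iff_exists.1 hxe
    obtain ⟨z, rfl⟩ := Sym2.mem_iff_exists.1 hxf
    simp only [Sym2.mk_isDiag_iff, ne_eq, Sym2.congr_right] at he hf hef
    refine ⟨⟨x, C s(x, y), y, z⟩, ?_, rfl⟩
    simp only [mem_sigma, mem_univ, mem_offDiag, mem_filter, true_and, and_true]
    exact ⟨Ne.symm he, ⟨Ne.symm hf, hc.symm⟩, hef⟩

lemma two_mul_Psi_add (C : EdgeColoring n) : 2 * Psi C + n * (n - 1) = Phi C := by
  have hP : 2 * Psi C = #(incidentPairs C) := by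
    show 2 * (#(incidentPairs C) / 2) = _
    refine Nat.two_mul_div_two_of_even ?_
    rw [card_incidentPairs]
    exact Finset.even_sum _ fun x _ => Finset.even_sum _ fun μ _ => Nat.even_mul_pred_self _
  have hsq (a : ℕ) : a ^ 2 = a * (a - 1) + a := by
    rw [Nat.mul_sub_one, Nat.sub_add_cancel (Nat.le_mul_self a), sq]
  simp only [hP, card_incidentPairs, Phi, hsq, sum_add_distrib, sum_aCount_eq, sum_const,
    card_univ, Fintype.card_fin, smul_eq_mul]

lemma Psi_lt_Psi_iff {C D : EdgeColoring n} : Psi D < Psi C ↔ Phi D < Phi C := by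
  have := two_mul_Psi_add C
  have := two_mul_Psi_add D
  omega

lemma aCount_congr {C D : EdgeColoring n} {w : Fin n} (h : ∀ y, D s(w, y) = C s(w, y)) :
    aCount D w = aCount C w := by
  ext μ
  simp only [aCount, h]

lemma one_le_aCount {C : EdgeColoring n} {u v : Fin n} (huv : u ≠ v) :
    1 ≤ aCount C v (C s(u, v)) :=
  card_pos.2 ⟨u, by simp [huv, Sym2.eq_swap]⟩

lemma aCount_eq_ite_add {C : EdgeColoring n} {u v : Fin n} (huv : u ≠ v) (τ : Fin (n - 1)) :
    aCount C u τ = (if C s(u, v) = τ then 1 else 0) + #{w ∈ {u, v}ᶜ | C s(w, u) = τ} := by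
  rw [aCount, card_filter, card_filter, Fintype.sum_eq_add_sum_compl v,
    ← sum_erase (a := u) _ (by simp)]
  congr 1
  · simp [Ne.symm huv]
  · refine sum_congr (by ext; simp) fun w hw => ?_
    simp_all [Sym2.eq_swap]

lemma Phi_add_eq_of_aCount_eq {C D : EdgeColoring n} {u v : Fin n} (huv : u ≠ v)
    (h : ∀ w ∈ ({u, v}ᶜ : Finset (Fin n)), aCount D w = aCount C w) :
    Phi D + (∑ μ, aCount C u μ ^ 2 + ∑ μ, aCount C v μ ^ 2) =
      Phi C + (∑ μ, aCount D u μ ^ 2 + ∑ μ, aCount D v μ ^ 2) := by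
  have hrest : ∑ w ∈ {u, v}ᶜ, ∑ μ, aCount D w μ ^ 2 = ∑ w ∈ {u, v}ᶜ, ∑ μ, aCount C w μ ^ 2 :=
    sum_congr rfl fun w hw => by rw [h w hw]
  rw [Phi, Phi, ← sum_add_sum_compl {u, v}, ← sum_add_sum_compl {u, v} (fun w => _),
    sum_pair huv, sum_pair huv, hrest]
  ring

namespace EdgeColoring

def recolor (C : EdgeColoring n) (u v : Fin n) (ν : Fin (n - 1)) : EdgeColoring n :=
  fun e => if e = s(u, v) then ν else C e

lemma recolor_comm (C : EdgeColoring n) (u v : Fin n) (ν : Fin (n - 1)) :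
    C.recolor u v ν = C.recolor v u ν := by
  unfold recolor
  rw [Sym2.eq_swap]

lemma recolor_apply_of_ne (C : EdgeColoring n) {u v : Fin n} (ν : Fin (n - 1))
    {e : Sym2 (Fin n)} (he : e ≠ s(u, v)) : C.recolor u v ν e = C e :=
  if_neg he

lemma aCount_recolor_of_mem_compl {C : EdgeColoring n} {u v w : Fin n} (ν : Fin (n - 1))
    (hw : w ∈ ({u, v}ᶜ : Finset (Fin n))) : aCount (C.recolor u v ν) w = aCount C w :=
  aCount_congr fun y => recolor_apply_of_ne C ν (by simp_all)

lemma aCount_recolor_left {C : EdgeColoring n} {u v : Fin n} (huv : u ≠ v)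
    (ν τ : Fin (n - 1)) :
    aCount (C.recolor u v ν) u τ =
      (if ν = τ then 1 else 0) + #{w ∈ {u, v}ᶜ | C s(w, u) = τ} := by
  rw [aCount_eq_ite_add huv, recolor, if_pos rfl]
  congr 2
  ext w
  simp only [mem_filter, mem_compl, mem_insert, mem_singleton, not_or]
  refine and_congr_right fun hw => ?_
  rw [recolor_apply_of_ne C ν (by simp [hw.1, hw.2])]

lemma aCount_recolor_self {C : EdgeColoring n} {u v : Fin n} (huv : u ≠ v) {ν : Fin (n - 1)}
    (hν : ν ≠ C s(u, v)) : aCount (C.recolor u v ν) u ν = aCount C u ν + 1 := by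
  rw [aCount_recolor_left huv, aCount_eq_ite_add huv, if_pos rfl, if_neg hν.symm]
  ring

lemma sum_sq_aCount_recolor {C : EdgeColoring n} {u v : Fin n} (huv : u ≠ v)
    {ν : Fin (n - 1)} (hν : ν ≠ C s(u, v)) :
    ∑ τ, aCount (C.recolor u v ν) u τ ^ 2 + 2 * aCount C u (C s(u, v)) =
      ∑ τ, aCount C u τ ^ 2 + 2 * aCount C u ν + 2 := by
  have hC := aCount_eq_ite_add (C := C) huv
  simp only [aCount_recolor_left huv, hC, sum_sq_ite_add, if_true, if_neg hν.symm]
  ring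

lemma Phi_recolor {C : EdgeColoring n} {u v : Fin n} (huv : u ≠ v) {ν : Fin (n - 1)}
    (hν : ν ≠ C s(u, v)) :
    Phi (C.recolor u v ν) + 2 * (aCount C u (C s(u, v)) + aCount C v (C s(u, v))) =
      Phi C + 2 * (aCount C u ν + aCount C v ν) + 4 := by
  have hu := sum_sq_aCount_recolor huv hν
  have hv := sum_sq_aCount_recolor huv.symm (C := C) (Sym2.eq_swap (a := u) ▸ hν)
  rw [← recolor_comm, Sym2.eq_swap] at hv
  have := Phi_add_eq_of_aCount_eq huv fun w hw => aCount_recolor_of_mem_compl (C := C) ν hw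
  omega

end EdgeColoring

namespace LocallyOptimal

variable {C : EdgeColoring n}

lemma Phi_le_Phi_recolor (hC : LocallyOptimal C) {u v : Fin n} (huv : u ≠ v) {ν : Fin (n - 1)}
    (hν : ν ≠ C s(u, v)) :
    Phi C ≤ Phi (C.recolor u v ν) := by
  have hdiff : DiffersOnOneEdge C (C.recolor u v ν) :=
    ⟨s(u, v), by simpa using huv, by simpa [EdgeColoring.recolor] using hν,
      fun _ _ hf => EdgeColoring.recolor_apply_of_ne C ν hf⟩
  have := hC _ hdiff
  have := two_mul_Psi_add C
  have := two_mul_Psi_add (C.recolor u v ν)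
  omega

lemma aCount_add_aCount_le (hC : LocallyOptimal C) {u v : Fin n} (huv : u ≠ v) (ν : Fin (n - 1)) :
    aCount C u (C s(u, v)) + aCount C v (C s(u, v)) ≤ aCount C u ν + aCount C v ν + 2 := by
  rcases eq_or_ne ν (C s(u, v)) with rfl | hν
  · omega
  · have := EdgeColoring.Phi_recolor huv hν
    have := hC.Phi_le_Phi_recolor huv hν
    omega

lemma aCount_add_aCount_le_three (hC : LocallyOptimal C) {u v : Fin n} (huv : u ≠ v) :
    aCount C u (C s(u, v)) + aCount C v (C s(u, v)) ≤ 3 := by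
  set μ := C s(u, v)
  have hsum : ∑ ν ∈ {μ}ᶜ, (aCount C u μ + aCount C v μ) ≤
      ∑ ν ∈ {μ}ᶜ, (aCount C u ν + aCount C v ν + 2) :=
    sum_le_sum fun ν _ => hC.aCount_add_aCount_le huv ν
  have hu := sum_aCount_eq C u
  have hv := sum_aCount_eq C v
  rw [Fintype.sum_eq_add_sum_compl μ] at hu hv
  have hcard : #({μ}ᶜ : Finset (Fin (n - 1))) = n - 2 := by simp [card_compl]; omega
  simp only [sum_add_distrib, sum_const, hcard, smul_eq_mul] at hsum
  by_contra! h
  have : (n - 2) * 4 ≤ (n - 2) * aCount C u μ + (n - 2) * aCount C v μ := by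
    rw [← mul_add]; exact Nat.mul_le_mul_left _ h
  omega

lemma aCount_le_two (hC : LocallyOptimal C) (u : Fin n) (ρ : Fin (n - 1)) : aCount C u ρ ≤ 2 := by
  by_contra! h
  obtain ⟨v, hv⟩ := card_pos.1 (h.trans' (by norm_num) : 0 < aCount C u ρ)
  simp only [mem_filter, mem_univ, true_and] at hv
  have := hC.aCount_add_aCount_le_three hv.1.symm
  have := one_le_aCount (C := C) hv.1.symm
  rw [hv.2] at *
  omega

end LocallyOptimal

lemma exists_two_le_aCount {C : EdgeColoring n} (hC : ¬ IsOneFactorization C) :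
    ∃ u ρ, 2 ≤ aCount C u ρ := by
  simp only [IsOneFactorization, not_forall, not_not] at hC
  obtain ⟨e, f, he, hf, hef, ⟨x, hxe, hxf⟩, hc⟩ := hC
  obtain ⟨y, rfl⟩ := Sym2.mem_iff_exists.1 hxe
  obtain ⟨z, rfl⟩ := Sym2.mem_iff_exists.1 hxf
  simp only [Sym2.mk_isDiag_iff, ne_eq, Sym2.congr_right] at he hf hef
  exact ⟨x, C s(x, y), one_lt_card.2
    ⟨y, by simp [Ne.symm he], z, by simp [Ne.symm hf, hc], hef⟩⟩

namespace EdgeColoring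

/-- Meant for `S ⊆ {u, v}ᶜ`: then for each `w ∈ S` the edges `wu` and `wv` exchange their colors
and every other edge keeps its color (an edge inside `S` is fixed by the transposition). -/
def flipAlong (C : EdgeColoring n) (u v : Fin n) (S : Finset (Fin n)) : EdgeColoring n :=
  fun e => if ∃ w ∈ S, w ∈ e then C (e.map (Equiv.swap u v)) else C e

variable {C : EdgeColoring n} {u v : Fin n} {S : Finset (Fin n)}

lemma flipAlong_apply_of_notMem {e : Sym2 (Fin n)} (hu : u ∉ e) (hv : v ∉ e) :
    C.flipAlong u v S e = C e := by
  unfold flipAlong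
  split_ifs <;> simp only [Sym2.map_swap_eq_self hu hv]

lemma flipAlong_apply_mk (hS : S ⊆ {u, v}ᶜ) {w : Fin n} (hw : w ∈ ({u, v}ᶜ : Finset (Fin n)))
    (y : Fin n) :
    C.flipAlong u v S s(w, y) = C s(w, if w ∈ S then Equiv.swap u v y else y) := by
  simp only [mem_compl, mem_insert, mem_singleton, not_or] at hw
  unfold flipAlong
  by_cases hwS : w ∈ S
  · rw [if_pos ⟨w, hwS, Sym2.mem_mk_left _ _⟩, if_pos hwS, Sym2.map_mk,
      Equiv.swap_apply_of_ne_of_ne hw.1 hw.2]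
  rw [if_neg hwS]
  split_ifs with h
  · obtain ⟨z, hz, hze⟩ := h
    rcases Sym2.mem_iff.1 hze with rfl | rfl
    · exact absurd hz hwS
    · have := hS hz
      simp only [mem_compl, mem_insert, mem_singleton, not_or] at this
      rw [Sym2.map_swap_eq_self] <;> simp [hw.1, hw.2, this.1, this.2, Ne.symm]
  · rfl

lemma flipAlong_apply_self (hS : S ⊆ {u, v}ᶜ) : C.flipAlong u v S s(u, v) = C s(u, v) := by
  unfold flipAlong
  rw [if_neg]
  rintro ⟨w, hw, hwe⟩
  have := hS hw
  rcases Sym2.mem_iff.1 hwe with rfl | rfl <;> simp at this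

lemma isFlip_flipAlong (hS : S ⊆ {u, v}ᶜ) : IsFlip C (C.flipAlong u v S) u v := by
  refine ⟨flipAlong_apply_self hS, fun e _ hu hv => flipAlong_apply_of_notMem hu hv,
    fun w hwu hwv => ?_⟩
  have hw : w ∈ ({u, v}ᶜ : Finset (Fin n)) := by simp [hwu, hwv]
  by_cases hwS : w ∈ S <;> simp [flipAlong_apply_mk hS hw, hwS]

lemma aCount_flipAlong_of_mem_compl (hS : S ⊆ {u, v}ᶜ) {w : Fin n}
    (hw : w ∈ ({u, v}ᶜ : Finset (Fin n))) : aCount (C.flipAlong u v S) w = aCount C w := by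
  by_cases hwS : w ∈ S
  · ext τ
    simp only [aCount, card_filter, flipAlong_apply_mk hS hw, if_pos hwS]
    have hwuv : Equiv.swap u v w = w := by
      simp only [mem_compl, mem_insert, mem_singleton, not_or] at hw
      exact Equiv.swap_apply_of_ne_of_ne hw.1 hw.2
    refine Fintype.sum_equiv (Equiv.swap u v) _ _ fun y => ?_
    simp only [(Equiv.swap u v).injective.ne_iff' hwuv]
  · exact aCount_congr fun y => by rw [flipAlong_apply_mk hS hw, if_neg hwS]

def colorPair (C : EdgeColoring n) (u v w : Fin n) : Fin (n - 1) × Fin (n - 1) :=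
  (C s(w, u), C s(w, v))

lemma aCount_left_eq_ite_add (C : EdgeColoring n) (huv : u ≠ v) (τ : Fin (n - 1)) :
    aCount C u τ =
      (if C s(u, v) = τ then 1 else 0) + #{w ∈ {u, v}ᶜ | (C.colorPair u v w).1 = τ} :=
  aCount_eq_ite_add huv τ

lemma aCount_right_eq_ite_add (C : EdgeColoring n) (huv : u ≠ v) (τ : Fin (n - 1)) :
    aCount C v τ =
      (if C s(u, v) = τ then 1 else 0) + #{w ∈ {u, v}ᶜ | (C.colorPair u v w).2 = τ} := by
  rw [aCount_eq_ite_add huv.symm, Sym2.eq_swap, pair_comm]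
  rfl

lemma colorPair_flipAlong (hS : S ⊆ {u, v}ᶜ) {w : Fin n} (hw : w ∈ ({u, v}ᶜ : Finset (Fin n))) :
    (C.flipAlong u v S).colorPair u v w =
      if w ∈ S then (C.colorPair u v w).swap else C.colorPair u v w := by
  simp only [colorPair, flipAlong_apply_mk hS hw]
  split_ifs <;> simp

lemma card_colorPair_flipAlong (hS : S ⊆ {u, v}ᶜ) (τ : Fin (n - 1)) :
    #{w ∈ {u, v}ᶜ | ((C.flipAlong u v S).colorPair u v w).1 = τ} +
        #{w ∈ {u, v}ᶜ | ((C.flipAlong u v S).colorPair u v w).2 = τ} =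
      #{w ∈ {u, v}ᶜ | (C.colorPair u v w).1 = τ} + #{w ∈ {u, v}ᶜ | (C.colorPair u v w).2 = τ} := by
  have e (p : Fin (n - 1) × Fin (n - 1) → Fin (n - 1)) :
      ({u, v}ᶜ : Finset (Fin n)).filter (fun w => p ((C.flipAlong u v S).colorPair u v w) = τ) =
        ({u, v}ᶜ : Finset (Fin n)).filter fun w =>
          p (if w ∈ S then (C.colorPair u v w).swap else C.colorPair u v w) = τ :=
    filter_congr fun w hw => by rw [colorPair_flipAlong hS hw]
  rw [e Prod.fst, e Prod.snd]
  exact card_fst_add_card_snd_ite_swap _ S _ τ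

lemma sq_add_sq_aCount_flipAlong_le (hS : S ⊆ {u, v}ᶜ) (huv : u ≠ v)
    (hbal : IsBalanced {u, v}ᶜ ((C.flipAlong u v S).colorPair u v)) (τ : Fin (n - 1)) :
    aCount (C.flipAlong u v S) u τ ^ 2 + aCount (C.flipAlong u v S) v τ ^ 2 ≤
      aCount C u τ ^ 2 + aCount C v τ ^ 2 := by
  rw [aCount_left_eq_ite_add _ huv, aCount_right_eq_ite_add _ huv, flipAlong_apply_self hS,
    aCount_left_eq_ite_add C huv, aCount_right_eq_ite_add C huv]
  exact sq_add_sq_le_of_balanced _ (card_colorPair_flipAlong hS τ) (hbal τ).1 (hbal τ).2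

lemma sq_add_sq_aCount_flipAlong_lt (hS : S ⊆ {u, v}ᶜ) (huv : u ≠ v)
    (hbal : IsBalanced {u, v}ᶜ ((C.flipAlong u v S).colorPair u v)) {ρ : Fin (n - 1)}
    (hρ : aCount C v ρ + 2 ≤ aCount C u ρ) :
    aCount (C.flipAlong u v S) u ρ ^ 2 + aCount (C.flipAlong u v S) v ρ ^ 2 <
      aCount C u ρ ^ 2 + aCount C v ρ ^ 2 := by
  rw [aCount_left_eq_ite_add C huv, aCount_right_eq_ite_add C huv] at hρ
  rw [aCount_left_eq_ite_add _ huv, aCount_right_eq_ite_add _ huv, flipAlong_apply_self hS,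
    aCount_left_eq_ite_add C huv, aCount_right_eq_ite_add C huv]
  exact sq_add_sq_lt_of_balanced _ (card_colorPair_flipAlong hS ρ) (hbal ρ).1 (hbal ρ).2 (by omega)

end EdgeColoring

open EdgeColoring in
theorem exists_isFlip_Phi_lt {C : EdgeColoring n} {u v : Fin n} {ρ : Fin (n - 1)}
    (hρ : aCount C v ρ + 2 ≤ aCount C u ρ) : ∃ D, IsFlip C D u v ∧ Phi D < Phi C := by
  have huv : u ≠ v := by rintro rfl; omega
  obtain ⟨S, hSW, hbal⟩ := exists_subset_isBalanced {u, v}ᶜ (C.colorPair u v)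
  replace hbal : IsBalanced {u, v}ᶜ ((C.flipAlong u v S).colorPair u v) :=
    hbal.congr fun w hw => colorPair_flipAlong hSW hw
  have hlt := sum_lt_sum (fun τ _ => sq_add_sq_aCount_flipAlong_le hSW huv hbal τ)
    ⟨ρ, mem_univ _, sq_add_sq_aCount_flipAlong_lt hSW huv hbal hρ⟩
  rw [sum_add_distrib, sum_add_distrib] at hlt
  have := Phi_add_eq_of_aCount_eq huv fun w hw => aCount_flipAlong_of_mem_compl (C := C) hSW hw
  exact ⟨C.flipAlong u v S, isFlip_flipAlong hSW, by omega⟩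

lemma even_sum_aCount (C : EdgeColoring n) (μ : Fin (n - 1)) : Even (∑ v, aCount C v μ) := by
  classical
  have h v : aCount C v μ = (monoGraph C μ).degree v := by
    rw [← SimpleGraph.card_neighborFinset_eq_degree, SimpleGraph.neighborFinset_eq_filter, aCount]
    congr 1
    ext w
    rw [mem_filter, mem_filter]
    simp only [mem_univ, true_and, monoGraph, ne_comm]
  simp only [h, SimpleGraph.sum_degrees_eq_twice_card_edges, even_two_mul]

lemma sum_sum_aCount (C : EdgeColoring n) : ∑ μ, ∑ v, aCount C v μ = n * (n - 1) := by
  rw [sum_comm]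
  simp [sum_aCount_eq]

lemma add_two_le_sum_aCount (hn : Even n) {C : EdgeColoring n} {ρ : Fin (n - 1)} {w : Fin n}
    (hw : aCount C w ρ = 2) (h : ∀ v, aCount C v ρ ≠ 0) : n + 2 ≤ ∑ v, aCount C v ρ := by
  have := sum_lt_sum (s := univ) (f := fun _ => 1) (fun v _ => Nat.one_le_iff_ne_zero.2 (h v))
    ⟨w, mem_univ _, by omega⟩
  simp only [sum_const, card_univ, Fintype.card_fin, smul_eq_mul, mul_one] at this
  obtain ⟨k, hk⟩ := even_sum_aCount C ρ
  obtain ⟨m, rfl⟩ := hn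
  omega

lemma exists_sum_aCount_add_two_le (hn : Even n) {C : EdgeColoring n} {ρ : Fin (n - 1)}
    (hρ : n + 2 ≤ ∑ v, aCount C v ρ) : ∃ σ, ∑ v, aCount C v σ + 2 ≤ n := by
  by_contra! h
  -- color degree sums are even, and so is `n`
  have hge σ : n ≤ ∑ v, aCount C v σ := by
    have := h σ
    obtain ⟨k, hk⟩ := even_sum_aCount C σ
    obtain ⟨m, rfl⟩ := hn
    omega
  have := sum_lt_sum (s := univ) (fun σ _ => hge σ) ⟨ρ, mem_univ _, by omega⟩
  rw [sum_sum_aCount, sum_const, card_univ, Fintype.card_fin, smul_eq_mul, mul_comm] at this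
  exact lt_irrefl _ this

lemma exists_ne_aCount_eq_zero {C : EdgeColoring n} {σ : Fin (n - 1)}
    (h : ∑ v, aCount C v σ + 2 ≤ n) : ∃ u v, u ≠ v ∧ aCount C u σ = 0 ∧ aCount C v σ = 0 := by
  have hle : #{v | ¬ aCount C v σ = 0} ≤ ∑ v, aCount C v σ := by
    rw [card_eq_sum_ones, sum_filter]
    exact sum_le_sum fun v _ => by split_ifs <;> omega
  have hcard := card_filter_add_card_filter_not (s := univ) (fun v => aCount C v σ = 0)
  rw [card_univ, Fintype.card_fin] at hcard
  obtain ⟨u, hu, v, hv, huv⟩ := one_lt_card.1 (by omega : 1 < #{v | aCount C v σ = 0})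
  exact ⟨u, v, huv, (mem_filter.1 hu).2, (mem_filter.1 hv).2⟩

lemma exists_two_le_aCount_of_eq_zero {C : EdgeColoring n} {u : Fin n} {σ : Fin (n - 1)}
    (h : aCount C u σ = 0) : ∃ ρ, 2 ≤ aCount C u ρ := by
  by_contra! hlt
  have := sum_lt_sum (s := univ) (g := fun _ => 1) (fun μ _ => Nat.le_of_lt_succ (hlt μ))
    ⟨σ, mem_univ _, by omega⟩
  simp [sum_aCount_eq] at this

open EdgeColoring in
lemma LocallyOptimal.exists_Phi_lt {C : EdgeColoring n} (hC : LocallyOptimal C) {u v : Fin n}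
    (huv : u ≠ v) {σ : Fin (n - 1)} (hu : aCount C u σ = 0) (hv : aCount C v σ = 0) :
    ∃ (x y : Fin n) (D : EdgeColoring n),
      (∀ e : Sym2 (Fin n), ¬ e.IsDiag → x ∉ e → y ∉ e → D e = C e) ∧ Phi D < Phi C := by
  obtain ⟨ρ, hρ⟩ := exists_two_le_aCount_of_eq_zero hu
  have hρ : aCount C u ρ = 2 := le_antisymm (hC.aCount_le_two u ρ) hρ
  obtain ⟨x, hx⟩ := card_pos.1 (by omega : 0 < aCount C u ρ)
  obtain ⟨hxu, rfl⟩ := (mem_filter.1 hx).2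
  have hux : u ≠ x := Ne.symm hxu
  have hx₁ : aCount C x (C s(u, x)) = 1 := by
    have := hC.aCount_add_aCount_le_three hux
    have := one_le_aCount (C := C) hux
    omega
  have hσ : σ ≠ C s(u, x) := by rintro rfl; omega
  have hxσ : 1 ≤ aCount C x σ := by
    have := hC.aCount_add_aCount_le hux σ
    omega
  have hxv : x ≠ v := by rintro rfl; omega
  rcases (by have := hC.aCount_le_two x σ; omega : aCount C x σ = 2 ∨ aCount C x σ = 1)
    with hx₂ | hx₁'
  · obtain ⟨D, hD, hlt⟩ := exists_isFlip_Phi_lt (by omega : aCount C v σ + 2 ≤ aCount C x σ)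
    exact ⟨x, v, D, hD.2.1, hlt⟩
  have hR : Phi (C.recolor u x σ) = Phi C := by
    have := Phi_recolor hux hσ
    omega
  have hRx : aCount (C.recolor u x σ) x σ = 2 := by
    rw [recolor_comm, aCount_recolor_self hxu (Sym2.eq_swap (a := u) ▸ hσ), hx₁']
  have hRv : aCount (C.recolor u x σ) v σ = 0 := by
    rw [aCount_recolor_of_mem_compl σ (by simp [huv.symm, hxv.symm]), hv]
  obtain ⟨D, hD, hlt⟩ := exists_isFlip_Phi_lt (u := x) (v := v) (ρ := σ) (C := C.recolor u x σ)
    (by omega)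
  refine ⟨x, v, D, fun e he hxe hve => ?_, hR ▸ hlt⟩
  rw [hD.2.1 e he hxe hve, recolor_apply_of_ne]
  rintro rfl
  exact hxe (Sym2.mem_mk_right _ _)

end

theorem exists_two_vertex_recoloring_general (n : ℕ) (hn : Even n)
    (C : EdgeColoring n) (hC : LocallyOptimal C) (hnof : ¬ IsOneFactorization C) :
    ∃ (x y : Fin n) (C' : EdgeColoring n),
      (∀ e : Sym2 (Fin n), ¬ e.IsDiag → x ∉ e → y ∉ e → C' e = C e) ∧
      Psi C' < Psi C := by
  simp only [Psi_lt_Psi_iff]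
  obtain ⟨w, ρ, hw⟩ := exists_two_le_aCount hnof
  have hw : aCount C w ρ = 2 := le_antisymm (hC.aCount_le_two w ρ) hw
  by_cases hz : ∃ z, aCount C z ρ = 0
  · obtain ⟨z, hz⟩ := hz
    obtain ⟨D, hD, hlt⟩ := exists_isFlip_Phi_lt (by omega : aCount C z ρ + 2 ≤ aCount C w ρ)
    exact ⟨w, z, D, hD.2.1, hlt⟩
  · push Not at hz
    obtain ⟨σ, hσ⟩ := exists_sum_aCount_add_two_le hn (add_two_le_sum_aCount hn hw hz)
    obtain ⟨u, v, huv, hu, hv⟩ := exists_ne_aCount_eq_zero hσ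
    exact hC.exists_Phi_lt huv hu hv

/-- If `C` is a locally optimal coloring of `K_n` (`n ≥ 4` even) that is not a
one-factorization, then there are two vertices `x, y` and a coloring `C'` agreeing with `C` on all
edges not incident with `x` or `y` such that `Ψ(C') < Ψ(C)`. -/
theorem exists_two_vertex_recoloring (n : ℕ) (hn : Even n) (h4 : 4 ≤ n)
    (C : EdgeColoring n) (hC : LocallyOptimal C) (hnof : ¬ IsOneFactorization C) :
    ∃ (x y : Fin n) (C' : EdgeColoring n),
      (∀ e : Sym2 (Fin n), ¬ e.IsDiag → x ∉ e → y ∉ e → C' e = C e) ∧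
      Psi C' < Psi C :=
  exists_two_vertex_recoloring_general n hn C hC hnof
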